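/- arXiv:2605.30629 — 2 statements merged into one kernel-verified Lean document; each statement's English description precedes it below -/
import Mathlib

section
/- The upper incomplete gamma function satisfies Γ(s,x)/(x^{s-1} e^{-x}) → 1 as x → ∞, for any fixed real s. -/
/-! Writing `f z = z^{s-1} e^{-z}`, both `Γ(s, x)` and `f x` tend to `0`, and their derivatives
are `-f x` and `f x ((s-1)/x - 1)`, whose ratio tends to `1`; L'Hôpital's rule concludes. -/

open Filter Set

/-- The upper incomplete gamma function `Γ(s, x) = ∫ₓ^∞ z^{s-1} e^{-z} dz`. -/
noncomputable def uGamma (s x : ℝ) : ℝ := ∫ z in Set.Ioi x, z ^ (s - 1) * Real.exp (-z)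

open Real MeasureTheory Topology

theorem hasDerivAt_integral_Ioi {E : Type*} [NormedAddCommGroup E] [NormedSpace ℝ E]
    [CompleteSpace E] {f : ℝ → E} {a x : ℝ} (hf : IntegrableOn f (Ioi a))
    (hax : a < x) (hfx : ContinuousAt f x) :
    HasDerivAt (fun y => ∫ t in Ioi y, f t) (-f x) x := by
  have htail : (fun y => ∫ t in Ioi y, f t) =ᶠ[𝓝 x]
      fun y => (∫ t in Ioi a, f t) - ∫ t in a..y, f t := by
    filter_upwards [eventually_gt_nhds hax] with y hy
    rw [← intervalIntegral.integral_Ioi_sub_Ioi hf hy.le, sub_sub_cancel]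
  have hFTC : HasDerivAt (fun y => ∫ t in a..y, f t) (f x) x :=
    intervalIntegral.integral_hasDerivAt_right
      ((intervalIntegrable_iff_integrableOn_Ioc_of_le hax.le).2
        (hf.mono_set Ioc_subset_Ioi_self))
      (AEStronglyMeasurable.stronglyMeasurableAtFilter_of_mem hf.aestronglyMeasurable
        (Ioi_mem_nhds hax)) hfx
  exact (hFTC.const_sub _).congr_of_eventuallyEq htail

theorem tendsto_integral_Ioi_div_of_tendsto_deriv_div {f f' : ℝ → ℝ} {a c : ℝ}
    (hf : IntegrableOn f (Ioi a)) (hff' : ∀ᶠ x in atTop, HasDerivAt f (f' x) x)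
    (hf_tendsto : Tendsto f atTop (𝓝 0)) (hc : c ≠ 0)
    (hdiv : Tendsto (fun x => f' x / f x) atTop (𝓝 c)) :
    Tendsto (fun x => (∫ t in Ioi x, f t) / f x) atTop (𝓝 (-c⁻¹)) := by
  have htail : ∀ᶠ x in atTop, HasDerivAt (fun y => ∫ t in Ioi y, f t) (-f x) x := by
    filter_upwards [hff', eventually_gt_atTop a] with x hx hax
    exact hasDerivAt_integral_Ioi hf hax hx.continuousAt
  have hf' : ∀ᶠ x in atTop, f' x ≠ 0 := by
    filter_upwards [hdiv.eventually_ne hc] with x hx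
    exact (div_ne_zero_iff.1 hx).1
  have hratio : Tendsto (fun x => -f x / f' x) atTop (𝓝 (-c⁻¹)) := by
    refine (hdiv.inv₀ hc).neg.congr fun x => ?_
    rw [inv_div, neg_div]
  exact HasDerivAt.lhopital_zero_atTop htail hff' hf'
    (tendsto_integral_Ioi_zero tendsto_id) hf_tendsto hratio

theorem hasDerivAt_rpow_mul_exp_neg (s : ℝ) {x : ℝ} (hx : 0 < x) :
    HasDerivAt (fun z => z ^ s * exp (-z)) (x ^ s * exp (-x) * (s / x - 1)) x := by
  have hpow : HasDerivAt (fun z => z ^ s) (s * x ^ (s - 1)) x :=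
    hasDerivAt_rpow_const (Or.inl hx.ne')
  refine (hpow.mul (hasDerivAt_neg x).exp).congr_deriv ?_
  rw [rpow_sub_one hx.ne']
  field_simp
  ring

theorem integrableOn_rpow_mul_exp_neg_Ioi (s : ℝ) {a : ℝ} (ha : 0 < a) :
    IntegrableOn (fun z => z ^ s * exp (-z)) (Ioi a) := by
  refine integrable_of_isBigO_exp_neg one_half_pos
    (fun z hz => (hasDerivAt_rpow_mul_exp_neg s (ha.trans_le hz)).continuousAt.continuousWithinAt)
    ?_
  simpa only [mul_comm] using (Gamma_integrand_isLittleO s).isBigO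

/-- For any fixed real `s`, `Γ(s,x)/(x^{s-1} e^{-x}) → 1` as `x → ∞`. -/
theorem stmt10 (s : ℝ) :
    Tendsto (fun x : ℝ => uGamma s x / (x ^ (s - 1) * Real.exp (-x))) atTop (nhds 1) := by
  have hdiv : Tendsto (fun x => x ^ (s - 1) * exp (-x) * ((s - 1) / x - 1) /
      (x ^ (s - 1) * exp (-x))) atTop (𝓝 (-1)) := by
    have hlim : Tendsto (fun x : ℝ => (s - 1) / x - 1) atTop (𝓝 (-1)) := by
      simpa using ((tendsto_const_nhds (x := s - 1)).div_atTop tendsto_id).sub_const 1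
    refine hlim.congr' ?_
    filter_upwards [eventually_gt_atTop 0] with x hx
    rw [mul_div_cancel_left₀ _ (by positivity)]
  have h := tendsto_integral_Ioi_div_of_tendsto_deriv_div
    (integrableOn_rpow_mul_exp_neg_Ioi (s - 1) one_pos)
    (eventually_gt_atTop 0 |>.mono fun x hx => hasDerivAt_rpow_mul_exp_neg (s - 1) hx)
    (by simpa using tendsto_rpow_mul_exp_neg_mul_atTop_nhds_zero (s - 1) 1 one_pos)
    (by norm_num) hdiv
  simpa [uGamma] using h
end

section
/- Define S_0(t) = 0 and, for integers d ≥ 1, S_d(t) = e^{−2rt}[I_0(2rt) + I_d(2rt) + 2∑_{k=1}^{d-1} I_k(2rt)], where I_k is the modified Bessel function of the first kind. Then for all d ≥ 1 and t > 0, S_d satisfies the backward Kolmogorov equation d/dt S_d(t) = r (S_{d+1}(t) − 2 S_d(t) + S_{d-1}(t)), with initial condition S_d(0) = 1. -/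
open Filter Set

/-!
Write `S_d(t) = e^{-2rt} P_d(2rt)` with `P_d = ∑_{k<d} (I_k + I_{k+1})`; this agrees with the
definition for `d ≥ 1` and gives `P_0 = 0`. The Bessel recurrence `I_0' = I_1`,
`I_{k+1}' = (I_k + I_{k+2}) / 2`, obtained by differentiating the power series termwise, makes
`P` satisfy `P_d' = (P_{d+1} + P_{d-1}) / 2` for `d ≥ 1`, and the product rule with `e^{-2rt}`
turns this into the Kolmogorov equation. At `t = 0` only `I_0(0) = 1` survives.
-/

/-- The modified Bessel function of the first kind of integer order `n`:
`I_n(z) = ∑_{m≥0} (z/2)^{2m+n} / (m! (m+n)!)`. -/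
noncomputable def besselI (n : ℕ) (z : ℝ) : ℝ :=
  ∑' m : ℕ, (z / 2) ^ (2 * m + n) / ((m.factorial : ℝ) * (m + n).factorial)

/-- `S_d(t) = e^{-2rt}[I_0(2rt) + I_d(2rt) + 2 ∑_{k=1}^{d-1} I_k(2rt)]` for `d ≥ 1`,
with `S_0(t) = 0`. -/
noncomputable def Sfun (r : ℝ) (d : ℕ) (t : ℝ) : ℝ :=
  if d = 0 then 0
  else Real.exp (-(2 * r * t)) *
    (besselI 0 (2 * r * t) + besselI d (2 * r * t) +
      2 * ∑ k ∈ Finset.Ico 1 d, besselI k (2 * r * t))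

open Nat Finset

theorem hasDerivAt_tsum_of_norm_le {𝕜 F : Type*} [RCLike 𝕜] [NormedAddCommGroup F]
    [NormedSpace 𝕜 F] [CompleteSpace F] {f f' : ℕ → 𝕜 → F} {u : ℝ → ℕ → ℝ}
    (hu : ∀ R, Summable (u R)) (hf : ∀ m y, HasDerivAt (f m) (f' m y) y)
    (hf' : ∀ m y R, ‖y‖ ≤ R → ‖f' m y‖ ≤ u R m) (hf0 : Summable fun m => f m 0) (y : 𝕜) :
    HasDerivAt (fun z => ∑' m, f m z) (∑' m, f' m y) y :=
  hasDerivAt_tsum_of_isPreconnected (hu (‖y‖ + 1)) Metric.isOpen_ball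
    (convex_ball _ _).isPreconnected (fun m y _ => hf m y)
    (fun m z hz => hf' m z _ (mem_ball_zero_iff.mp hz).le)
    (Metric.mem_ball_self (by positivity)) hf0 (by simp)

theorem hasDerivAt_half_pow_div (k : ℕ) (c y : ℝ) :
    HasDerivAt (fun y => (y / 2) ^ (k + 1) / c) ((k + 1) * (y / 2) ^ k / (2 * c)) y := by
  refine ((((hasDerivAt_id' y).div_const 2).fun_pow (k + 1)).div_const c).congr_deriv ?_
  push_cast
  ring

noncomputable def besselTerm (n m : ℕ) (z : ℝ) : ℝ :=
  (z / 2) ^ (2 * m + n) / ((m ! : ℝ) * (m + n)!)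

theorem besselI_eq_tsum (n : ℕ) (z : ℝ) : besselI n z = ∑' m, besselTerm n m z := rfl

theorem abs_besselTerm_le {n m : ℕ} {y R : ℝ} (h : |y| ≤ R) :
    |besselTerm n m y| ≤ besselTerm n m R := by
  unfold besselTerm
  rw [abs_div, abs_pow, abs_of_pos (by positivity : (0 : ℝ) < m ! * (m + n)!), abs_div, abs_two]
  gcongr

theorem summable_besselTerm (n : ℕ) (z : ℝ) : Summable (besselTerm n · z) := by
  refine .of_norm_bounded
    ((Real.summable_pow_div_factorial (|z / 2| ^ 2)).mul_right (|z / 2| ^ n)) fun m => ?_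
  have hfac : (1 : ℝ) ≤ (m + n)! := mod_cast (m + n).factorial_pos
  rw [Real.norm_eq_abs, besselTerm, abs_div, abs_pow,
    abs_of_pos (by positivity : (0 : ℝ) < m ! * (m + n)!), div_mul_eq_mul_div, ← pow_mul,
    ← pow_add]
  exact div_le_div_of_nonneg_left (by positivity) (by positivity)
    (le_mul_of_one_le_right (by positivity) hfac)

theorem besselI_eq_add_tsum_succ (n : ℕ) (z : ℝ) :
    besselI n z = besselTerm n 0 z + ∑' m, besselTerm n (m + 1) z :=
  (summable_besselTerm n z).tsum_eq_zero_add

theorem besselI_zero_zero : besselI 0 0 = 1 := by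
  simp [besselI_eq_add_tsum_succ, besselTerm]

theorem besselI_succ_apply_zero (n : ℕ) : besselI (n + 1) 0 = 0 := by
  simp [besselI_eq_add_tsum_succ, besselTerm]

theorem hasDerivAt_besselTerm_zero_succ (m : ℕ) (y : ℝ) :
    HasDerivAt (besselTerm 0 (m + 1)) (besselTerm 1 m y) y := by
  convert hasDerivAt_half_pow_div (2 * m + 1) ((m + 1)! * (m + 1)!) y using 1
  · ext
    simp only [besselTerm, add_zero]
    ring_nf
  · simp only [besselTerm, factorial_succ]
    push_cast
    field_simp
    ring

theorem hasDerivAt_besselTerm_succ_zero (n : ℕ) (y : ℝ) :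
    HasDerivAt (besselTerm (n + 1) 0) (besselTerm n 0 y / 2) y := by
  convert hasDerivAt_half_pow_div n ((n + 1)!) y using 1
  · ext
    simp [besselTerm]
  · simp only [besselTerm, mul_zero, zero_add, factorial_zero, cast_one, one_mul, cast_add,
      factorial_succ, cast_mul]
    field_simp

/-- The termwise form of `I_{n+1}' = (I_n + I_{n+2}) / 2`: the factor `2m + n + 2` of the
derivative splits as `(m + 1) + (m + n + 1)`, each part cancelling against one factorial. -/
theorem hasDerivAt_besselTerm_succ_succ (n m : ℕ) (y : ℝ) :
    HasDerivAt (besselTerm (n + 1) (m + 1))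
      ((besselTerm n (m + 1) y + besselTerm (n + 2) m y) / 2) y := by
  convert hasDerivAt_half_pow_div (2 * m + n + 2) ((m + 1)! * (m + n + 2)!) y using 1
  · ext
    simp only [besselTerm]
    ring_nf
  · simp only [besselTerm, factorial_succ, show m + 1 + n = m + n + 1 by ring,
      show m + (n + 2) = m + n + 1 + 1 by ring]
    push_cast
    field_simp
    ring

theorem hasDerivAt_besselI_zero (z : ℝ) : HasDerivAt (besselI 0) (besselI 1 z) z := by
  have hsum := hasDerivAt_tsum_of_norm_le (fun R => summable_besselTerm 1 R)
    (fun m y => hasDerivAt_besselTerm_zero_succ m y) (fun _ _ _ hy => abs_besselTerm_le hy)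
    ((summable_nat_add_iff 1).mpr (summable_besselTerm 0 0)) z
  have hconst : besselTerm 0 0 = fun _ => 1 := by ext; simp [besselTerm]
  rw [funext (besselI_eq_add_tsum_succ 0), hconst, besselI_eq_tsum]
  exact ((hasDerivAt_const z 1).fun_add hsum).congr_deriv (zero_add _)

theorem hasDerivAt_besselI_succ (n : ℕ) (z : ℝ) :
    HasDerivAt (besselI (n + 1)) ((besselI n z + besselI (n + 2) z) / 2) z := by
  have hsum := hasDerivAt_tsum_of_norm_le
    (fun R => (((summable_nat_add_iff 1).mpr (summable_besselTerm n R)).add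
      (summable_besselTerm (n + 2) R)).div_const 2)
    (fun m y => hasDerivAt_besselTerm_succ_succ n m y)
    (fun m y R hy => by
      rw [Real.norm_eq_abs, abs_div, abs_two]
      gcongr
      exact (abs_add_le _ _).trans (add_le_add (abs_besselTerm_le hy) (abs_besselTerm_le hy)))
    ((summable_nat_add_iff 1).mpr (summable_besselTerm (n + 1) 0)) z
  rw [funext (besselI_eq_add_tsum_succ (n + 1))]
  refine ((hasDerivAt_besselTerm_succ_zero n z).fun_add hsum).congr_deriv ?_
  rw [tsum_div_const, ((summable_nat_add_iff 1).mpr (summable_besselTerm n z)).tsum_add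
    (summable_besselTerm (n + 2) z), besselI_eq_add_tsum_succ n, besselI_eq_tsum (n + 2)]
  ring

def adjacentPairSum (I : ℕ → ℝ → ℝ) (d : ℕ) (z : ℝ) : ℝ :=
  ∑ k ∈ range d, (I k z + I (k + 1) z)

theorem adjacentPairSum_succ (I : ℕ → ℝ → ℝ) (d : ℕ) (z : ℝ) :
    adjacentPairSum I (d + 1) z = adjacentPairSum I d z + (I d z + I (d + 1) z) :=
  sum_range_succ _ _

theorem hasDerivAt_adjacentPairSum_succ {I : ℕ → ℝ → ℝ}
    (h0 : ∀ z, HasDerivAt (I 0) (I 1 z) z)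
    (hsucc : ∀ n z, HasDerivAt (I (n + 1)) ((I n z + I (n + 2) z) / 2) z) (d : ℕ) (z : ℝ) :
    HasDerivAt (adjacentPairSum I (d + 1))
      ((adjacentPairSum I (d + 2) z + adjacentPairSum I d z) / 2) z := by
  induction d with
  | zero =>
    have hP1 : adjacentPairSum I 1 = fun y => I 0 y + I 1 y := by ext; simp [adjacentPairSum]
    rw [hP1]
    refine ((h0 z).fun_add (hsucc 0 z)).congr_deriv ?_
    simp only [adjacentPairSum, sum_range_succ, range_zero, sum_empty]
    ring
  | succ d ih =>
    rw [funext (adjacentPairSum_succ I (d + 1))]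
    refine (ih.fun_add ((hsucc d z).fun_add (hsucc (d + 1) z))).congr_deriv ?_
    simp only [adjacentPairSum_succ]
    ring

theorem sum_range_add_succ_eq {R : Type*} [CommSemiring R] (f : ℕ → R) {d : ℕ} (hd : 1 ≤ d) :
    ∑ k ∈ range d, (f k + f (k + 1)) = f 0 + f d + 2 * ∑ k ∈ Ico 1 d, f k := by
  induction d, hd using Nat.le_induction with
  | base => simp
  | succ d hd ih => rw [sum_range_succ, ih, sum_Ico_succ_top hd]; ring

theorem Sfun_eq (r : ℝ) (d : ℕ) (t : ℝ) :
    Sfun r d t = Real.exp (-(2 * r * t)) * adjacentPairSum besselI d (2 * r * t) := by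
  rcases Nat.eq_zero_or_pos d with rfl | hd
  · simp [Sfun, adjacentPairSum]
  · rw [Sfun, if_neg hd.ne', adjacentPairSum, sum_range_add_succ_eq _ hd]

theorem adjacentPairSum_besselI_succ_apply_zero (n : ℕ) :
    adjacentPairSum besselI (n + 1) 0 = 1 := by
  simp [adjacentPairSum, sum_range_succ', besselI_zero_zero, besselI_succ_apply_zero]

theorem stmt14_general (r : ℝ) (d : ℕ) (hd : 1 ≤ d) :
    (∀ t : ℝ, 0 < t →
      HasDerivAt (fun s => Sfun r d s)
        (r * (Sfun r (d + 1) t - 2 * Sfun r d t + Sfun r (d - 1) t)) t) ∧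
    Sfun r d 0 = 1 := by
  obtain ⟨n, rfl⟩ := Nat.exists_eq_add_of_le' hd
  simp only [Sfun_eq, mul_zero, neg_zero, Real.exp_zero, one_mul,
    adjacentPairSum_besselI_succ_apply_zero, add_tsub_cancel_right, and_true]
  intro t _
  have hlin : HasDerivAt (fun s => 2 * r * s) (2 * r) t := by
    simpa using (hasDerivAt_id t).const_mul (2 * r)
  have hpair := (hasDerivAt_adjacentPairSum_succ hasDerivAt_besselI_zero
    hasDerivAt_besselI_succ n (2 * r * t)).comp t hlin
  refine (hlin.neg.exp.mul hpair).congr_deriv ?_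
  simp only [Pi.neg_apply, Function.comp_apply]
  ring

/-- For all `d ≥ 1` and `t > 0`, `S_d` satisfies the backward Kolmogorov equation
`d/dt S_d(t) = r (S_{d+1}(t) − 2 S_d(t) + S_{d-1}(t))`, with initial condition
`S_d(0) = 1`. -/
theorem stmt14 (r : ℝ) (hr : 0 < r) (d : ℕ) (hd : 1 ≤ d) :
    (∀ t : ℝ, 0 < t →
      HasDerivAt (fun s => Sfun r d s)
        (r * (Sfun r (d + 1) t - 2 * Sfun r d t + Sfun r (d - 1) t)) t) ∧
    Sfun r d 0 = 1 :=
  stmt14_general r d hd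
end
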